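/- arXiv:2210.13146 — 5 statements merged into one kernel-verified Lean document; each statement's English description precedes it below -/
import Mathlib

section
/- Let σ be an involutive automorphism of the Lie algebra L satisfying σ(Z) = −Z, and let L^σ = {v ∈ L : σ(v) = v} be its fixed-point subalgebra. Then for every X ∈ p₊ one has the sum decomposition L = L^σ + k + Z_L(X) (sum of vector subspaces). -/
/-!
Write `v = b + x + w` with `b ∈ k`, `x ∈ p₊`, `w ∈ p₋`. Since `σ Z = -Z`, the automorphism `σ`
exchanges the `±i`-eigenspaces of `ad Z`, so `σ w ∈ p₊`, and `w + σ w` is `σ`-fixed. Moreover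
`p₊` is abelian: `⁅p₊, p₊⁆` lies in the `2i`-eigenspace, which vanishes because `0, i, -i` are the
only eigenvalues. Hence `v = (w + σ w) + b + (x - σ w)` with `x - σ w ∈ p₊ ⊆ Z_L(X)`.
-/

open Module End

theorem Module.End.eigenspace_eq_bot_of_notMem {K V : Type*} [Field K] [AddCommGroup V]
    [Module K V] (f : End K V) {s : Set K} (hs : ⨆ μ ∈ s, f.eigenspace μ = ⊤) {ν : K}
    (hν : ν ∉ s) : f.eigenspace ν = ⊥ := by
  have := f.eigenspaces_iSupIndep.disjoint_biSup hν
  rwa [hs, disjoint_top] at this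

section EigenspaceAd

variable {R L : Type*} [CommRing R] [LieRing L] [LieAlgebra R L]

theorem LieAlgebra.lie_mem_eigenspace_ad {Z x y : L} {α β : R}
    (hx : x ∈ (LieAlgebra.ad R L Z).eigenspace α) (hy : y ∈ (LieAlgebra.ad R L Z).eigenspace β) :
    ⁅x, y⁆ ∈ (LieAlgebra.ad R L Z).eigenspace (α + β) := by
  rw [mem_eigenspace_iff] at hx hy ⊢
  simp only [LieAlgebra.ad_apply] at hx hy ⊢
  rw [leibniz_lie, hx, hy, smul_lie, lie_smul, add_smul]

theorem LieAlgebra.lie_eq_zero_of_eigenspace_ad_add_eq_bot {Z x y : L} {α β : R}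
    (hx : x ∈ (LieAlgebra.ad R L Z).eigenspace α) (hy : y ∈ (LieAlgebra.ad R L Z).eigenspace β)
    (hαβ : (LieAlgebra.ad R L Z).eigenspace (α + β) = ⊥) : ⁅x, y⁆ = 0 := by
  simpa [hαβ] using LieAlgebra.lie_mem_eigenspace_ad hx hy

theorem LieHom.map_mem_eigenspace_ad_neg (σ : L →ₗ⁅R⁆ L) {Z x : L} {μ : R} (hZ : σ Z = -Z)
    (hx : x ∈ (LieAlgebra.ad R L Z).eigenspace μ) :
    σ x ∈ (LieAlgebra.ad R L Z).eigenspace (-μ) := by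
  rw [mem_eigenspace_iff] at hx ⊢
  simp only [LieAlgebra.ad_apply] at hx ⊢
  have h := congrArg σ hx
  rw [LieHom.map_lie, hZ, neg_lie, map_smul] at h
  rw [neg_smul, ← h, neg_neg]

end EigenspaceAd

theorem stmt_4_general {L : Type*} [LieRing L] [LieAlgebra ℂ L] (Z : L)
    (k pPlus pMinus : Submodule ℂ L)
    (hk : k = Module.End.eigenspace (LieAlgebra.ad ℂ L Z) 0)
    (hpPlus : pPlus = Module.End.eigenspace (LieAlgebra.ad ℂ L Z) Complex.I)
    (hpMinus : pMinus = Module.End.eigenspace (LieAlgebra.ad ℂ L Z) (-Complex.I))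
    (hspan : k ⊔ pPlus ⊔ pMinus = ⊤)
    (σ : L →ₗ⁅ℂ⁆ L) (hinv : ∀ v : L, σ (σ v) = v) (hZ : σ Z = -Z) :
    ∀ X ∈ pPlus, ∀ v : L,
      ∃ a b c : L, σ a = a ∧ b ∈ k ∧ ⁅X, c⁆ = 0 ∧ v = a + b + c := by
  subst hk hpPlus hpMinus
  intro X hX v
  have h2I : (LieAlgebra.ad ℂ L Z).eigenspace (Complex.I + Complex.I) = ⊥ := by
    refine eigenspace_eq_bot_of_notMem _ (s := {0, Complex.I, -Complex.I}) ?_ ?_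
    · simpa only [iSup_insert, iSup_singleton, sup_assoc] using hspan
    · norm_num [Complex.ext_iff]
  obtain ⟨u, hu, w, hw, rfl⟩ := Submodule.mem_sup.mp (hspan ▸ Submodule.mem_top : v ∈ _)
  obtain ⟨b, hb, x, hx, rfl⟩ := Submodule.mem_sup.mp hu
  have hσw : σ w ∈ (LieAlgebra.ad ℂ L Z).eigenspace Complex.I := by
    simpa using σ.map_mem_eigenspace_ad_neg hZ hw
  refine ⟨w + σ w, b, x - σ w, ?_, hb, ?_, by abel⟩
  · rw [map_add, hinv, add_comm]
  · rw [lie_sub, LieAlgebra.lie_eq_zero_of_eigenspace_ad_add_eq_bot hX hx h2I,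
      LieAlgebra.lie_eq_zero_of_eigenspace_ad_add_eq_bot hX hσw h2I, sub_zero]

/-- If `σ` is an involutive automorphism of `L` with `σ(Z) = −Z`,
and `L^σ` is its fixed-point subalgebra, then for every `X ∈ p₊` one has the
sum decomposition `L = L^σ + k + Z_L(X)` (sum of vector subspaces). -/
theorem stmt_4 {L : Type*} [LieRing L] [LieAlgebra ℂ L]
    [Module.Finite ℂ L] [LieAlgebra.IsSemisimple ℂ L] (Z : L)
    (k pPlus pMinus : Submodule ℂ L)
    (hk : k = Module.End.eigenspace (LieAlgebra.ad ℂ L Z) 0)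
    (hpPlus : pPlus = Module.End.eigenspace (LieAlgebra.ad ℂ L Z) Complex.I)
    (hpMinus : pMinus = Module.End.eigenspace (LieAlgebra.ad ℂ L Z) (-Complex.I))
    (hspan : k ⊔ pPlus ⊔ pMinus = ⊤)
    (σ : L →ₗ⁅ℂ⁆ L) (hinv : ∀ v : L, σ (σ v) = v) (hZ : σ Z = -Z) :
    ∀ X ∈ pPlus, ∀ v : L,
      ∃ a b c : L, σ a = a ∧ b ∈ k ∧ ⁅X, c⁆ = 0 ∧ v = a + b + c :=
  stmt_4_general Z k pPlus pMinus hk hpPlus hpMinus hspan σ hinv hZ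
end

section
/- For every X ∈ p₊ and Y ∈ p₋ one has L ⊕ L = diag(L) + (k × k) + (Z_L(X) × Z_L(Y)) as a sum of vector subspaces of L ⊕ L, where diag(L) = {(v, v) : v ∈ L}. -/
/-- For every `X ∈ p₊` and `Y ∈ p₋` one has
`L ⊕ L = diag(L) + (k × k) + (Z_L(X) × Z_L(Y))` as a sum of vector subspaces
of `L ⊕ L`, where `diag(L) = {(v, v) : v ∈ L}`. -/
theorem stmt_6 {L : Type*} [LieRing L] [LieAlgebra ℂ L]
    [Module.Finite ℂ L] [LieAlgebra.IsSemisimple ℂ L] (Z : L)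
    (k pPlus pMinus : Submodule ℂ L)
    (hk : k = Module.End.eigenspace (LieAlgebra.ad ℂ L Z) 0)
    (hpPlus : pPlus = Module.End.eigenspace (LieAlgebra.ad ℂ L Z) Complex.I)
    (hpMinus : pMinus = Module.End.eigenspace (LieAlgebra.ad ℂ L Z) (-Complex.I))
    (hspan : k ⊔ pPlus ⊔ pMinus = ⊤) :
    ∀ X ∈ pPlus, ∀ Y ∈ pMinus, ∀ v₁ v₂ : L,
      ∃ d b₁ b₂ c₁ c₂ : L,
        b₁ ∈ k ∧ b₂ ∈ k ∧ ⁅X, c₁⁆ = 0 ∧ ⁅Y, c₂⁆ = 0 ∧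
        v₁ = d + b₁ + c₁ ∧ v₂ = d + b₂ + c₂ := by
  intro X hX Y hY v₁ v₂
  set f := LieAlgebra.ad ℂ L Z with hf
  -- eigenspaces for eigenvalues other than 0, I, -I are trivial
  have hzero : ∀ μ : ℂ, μ ≠ 0 → μ ≠ Complex.I → μ ≠ -Complex.I →
      Module.End.eigenspace f μ = ⊥ := by
    intro μ h0 h1 h2
    have hind := f.eigenspaces_iSupIndep μ
    refine hind.eq_bot_of_le ?_
    have : (⊤ : Submodule ℂ L) ≤ ⨆ ν, ⨆ _ : ν ≠ μ, Module.End.eigenspace f ν := by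
      rw [← hspan, hk, hpPlus, hpMinus]
      refine sup_le (sup_le ?_ ?_) ?_
      · exact le_iSup_of_le 0 (le_iSup_of_le (Ne.symm h0) le_rfl)
      · exact le_iSup_of_le Complex.I (le_iSup_of_le (Ne.symm h1) le_rfl)
      · exact le_iSup_of_le (-Complex.I) (le_iSup_of_le (Ne.symm h2) le_rfl)
    exact le_trans le_top this
  -- the bracket of two eigenvectors for eigenvalue μ with 2μ ∉ {0, I, -I} vanishes
  have hbr : ∀ (μ : ℂ) (a b : L), a ∈ Module.End.eigenspace f μ →
      b ∈ Module.End.eigenspace f μ → (μ + μ) ≠ 0 → (μ + μ) ≠ Complex.I →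
      (μ + μ) ≠ -Complex.I → ⁅a, b⁆ = 0 := by
    intro μ a b ha hb h0 h1 h2
    rw [Module.End.mem_eigenspace_iff] at ha hb
    have hmem : ⁅a, b⁆ ∈ Module.End.eigenspace f (μ + μ) := by
      rw [Module.End.mem_eigenspace_iff]
      show ⁅Z, ⁅a, b⁆⁆ = (μ + μ) • ⁅a, b⁆
      rw [leibniz_lie]
      have h1' : (⁅Z, a⁆ : L) = μ • a := ha
      have h2' : (⁅Z, b⁆ : L) = μ • b := hb
      rw [h1', h2', smul_lie, lie_smul, add_smul]
    rw [hzero _ h0 h1 h2] at hmem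
    simpa using hmem
  have hI2 : (Complex.I + Complex.I) ≠ 0 ∧ (Complex.I + Complex.I) ≠ Complex.I ∧
      (Complex.I + Complex.I) ≠ -Complex.I := by
    refine ⟨?_, ?_, ?_⟩ <;> simp [Complex.ext_iff] <;> norm_num
  have hI2' : (-Complex.I + -Complex.I) ≠ 0 ∧ (-Complex.I + -Complex.I) ≠ Complex.I ∧
      (-Complex.I + -Complex.I) ≠ -Complex.I := by
    refine ⟨?_, ?_, ?_⟩ <;> simp [Complex.ext_iff] <;> norm_num
  -- decompose v₁ and v₂
  have hdec : ∀ v : L, ∃ a u w : L, a ∈ k ∧ u ∈ pPlus ∧ w ∈ pMinus ∧ v = a + u + w := by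
    intro v
    have hv : v ∈ k ⊔ pPlus ⊔ pMinus := hspan ▸ Submodule.mem_top
    obtain ⟨au, hau, w, hw, h⟩ := Submodule.mem_sup.mp hv
    obtain ⟨a, ha, u, hu, h'⟩ := Submodule.mem_sup.mp hau
    exact ⟨a, u, w, ha, hu, hw, by rw [← h, ← h']⟩
  obtain ⟨a₁, u₁, w₁, ha₁, hu₁, hw₁, h₁⟩ := hdec v₁
  obtain ⟨a₂, u₂, w₂, ha₂, hu₂, hw₂, h₂⟩ := hdec v₂
  refine ⟨w₁ + u₂, a₁, a₂, u₁ - u₂, w₂ - w₁, ha₁, ha₂, ?_, ?_, by rw [h₁]; abel, by rw [h₂]; abel⟩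
  · rw [lie_sub, hbr Complex.I X u₁ (hpPlus ▸ hX) (hpPlus ▸ hu₁) hI2.1 hI2.2.1 hI2.2.2,
      hbr Complex.I X u₂ (hpPlus ▸ hX) (hpPlus ▸ hu₂) hI2.1 hI2.2.1 hI2.2.2, sub_zero]
  · rw [lie_sub, hbr (-Complex.I) Y w₂ (hpMinus ▸ hY) (hpMinus ▸ hw₂) hI2'.1 hI2'.2.1 hI2'.2.2,
      hbr (-Complex.I) Y w₁ (hpMinus ▸ hY) (hpMinus ▸ hw₁) hI2'.1 hI2'.2.1 hI2'.2.2, sub_zero]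
end

section
/- The centralizer of X decomposes as Z_L(X) = Z_L(X,H,Y) ⊕ g_1 ⊕ g_2, an internal direct sum of vector subspaces of L. -/
/-!
`ad X` shifts the `ad H`-degree by `2`, so it kills `g 1` and `g 2`, and `ad Y` kills `g (-1)` and
`g (-2)`. An element of nonzero degree killed by both `ad X` and `ad Y` is killed by
`ad H = ad ⁅X, Y⁆`, hence vanishes; so `ad X` is injective on `g (-1)` and `g (-2)`. If `v` of
degree `0` commutes with `X`, then `⁅Y, v⁆ ∈ g (-2)` commutes with `X` as well, so `v` centralizes
the whole triple. Decomposing an element of `Z_L(X)` by degree and using that the images under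
`ad X` of its components lie in distinct eigenspaces gives the decomposition.
-/

open LieAlgebra Module.End

theorem iSupIndep.eq_zero_of_add_add_eq_zero {ι R N : Type*} [Ring R] [AddCommGroup N]
    [Module R N] {p : ι → Submodule R N} (hp : iSupIndep p) {i j k : ι}
    (hij : i ≠ j) (hik : i ≠ k) (hjk : j ≠ k) {x y z : N}
    (hx : x ∈ p i) (hy : y ∈ p j) (hz : z ∈ p k) (hxyz : x + y + z = 0) :
    x = 0 ∧ y = 0 ∧ z = 0 := by
  have hx0 : x = 0 := by
    have hyz : y + z ∈ ⨆ l ∈ ({j, k} : Set ι), p l := by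
      rw [iSup_insert, iSup_singleton]
      exact Submodule.add_mem_sup hy hz
    refine Submodule.disjoint_def.mp (hp.disjoint_biSup (y := {j, k}) (by simp [hij, hik])) x hx ?_
    rw [eq_neg_of_add_eq_zero_left (a := x) (by rwa [← add_assoc])]
    exact Submodule.neg_mem _ hyz
  subst hx0
  have hy0 : y = 0 := by
    refine Submodule.disjoint_def.mp (hp.pairwiseDisjoint hjk) y hy ?_
    rw [eq_neg_of_add_eq_zero_left (a := y) (by simpa using hxyz)]
    exact Submodule.neg_mem _ hz
  subst hy0
  exact ⟨rfl, rfl, by simpa using hxyz⟩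

theorem Module.End.eigenspace_eq_bot_of_biSup_eq_top {K V : Type*} [Field K] [AddCommGroup V]
    [Module K V] (f : Module.End K V) {s : Set K} {μ : K}
    (hs : ⨆ ν ∈ s, f.eigenspace ν = ⊤) (hμ : μ ∉ s) : f.eigenspace μ = ⊥ :=
  disjoint_top.mp (hs ▸ f.eigenspaces_iSupIndep.disjoint_biSup hμ)

section SlTwoGrading

variable {K L : Type*} [Field K] [LieRing L] [LieAlgebra K L] {X H Y v : L}

theorem lie_mem_eigenspace_ad_add {a b : K} (hHX : ⁅H, X⁆ = a • X)
    (hv : v ∈ (ad K L H).eigenspace b) : ⁅X, v⁆ ∈ (ad K L H).eigenspace (a + b) := by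
  rw [mem_eigenspace_iff, ad_apply] at hv ⊢
  rw [leibniz_lie, hHX, hv, smul_lie, lie_smul, add_smul]

theorem lie_eq_zero_of_eigenspace_add_eq_bot {a b : K} (hHX : ⁅H, X⁆ = a • X)
    (hbot : (ad K L H).eigenspace (a + b) = ⊥) (hv : v ∈ (ad K L H).eigenspace b) :
    ⁅X, v⁆ = 0 := by
  simpa [hbot] using lie_mem_eigenspace_ad_add hHX hv

theorem eq_zero_of_lie_eq_zero_of_mem_eigenspace {μ : K} (hHY : ⁅H, Y⁆ = (-2 : K) • Y)
    (hXY : ⁅X, Y⁆ = H) (hμ : μ ≠ 0) (hbot : (ad K L H).eigenspace (-2 + μ) = ⊥)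
    (hv : v ∈ (ad K L H).eigenspace μ) (hXv : ⁅X, v⁆ = 0) : v = 0 := by
  have hYv : ⁅Y, v⁆ = 0 := lie_eq_zero_of_eigenspace_add_eq_bot hHY hbot hv
  rw [mem_eigenspace_iff, ad_apply, ← hXY, lie_lie, hXv, hYv] at hv
  simpa [hμ] using hv.symm


theorem mem_centralizer_of_lie_eq_zero_of_mem_eigenspace_zero [CharZero K]
    (hHY : ⁅H, Y⁆ = (-2 : K) • Y)
    (hXY : ⁅X, Y⁆ = H) (hbot : (ad K L H).eigenspace (-4) = ⊥)
    (hv : v ∈ (ad K L H).eigenspace 0) (hXv : ⁅X, v⁆ = 0) :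
    v ∈ LinearMap.ker (ad K L X) ⊓ LinearMap.ker (ad K L H) ⊓ LinearMap.ker (ad K L Y) := by
  have hHv : ⁅H, v⁆ = 0 := by simpa using hv
  have hYv : ⁅Y, v⁆ ∈ (ad K L H).eigenspace (-2) := by
    simpa using lie_mem_eigenspace_ad_add hHY hv
  have hXYv : ⁅X, ⁅Y, v⁆⁆ = 0 := by rw [leibniz_lie, hXY, hHv, hXv, lie_zero, zero_add]
  have hYv0 : ⁅Y, v⁆ = 0 :=
    eq_zero_of_lie_eq_zero_of_mem_eigenspace hHY hXY (by norm_num) (by norm_num [hbot]) hYv hXYv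
  simp [hXv, hHv, hYv0]

theorem ker_ad_eq_centralizer_sup_eigenspace_one_sup_eigenspace_two [CharZero K]
    (hHX : ⁅H, X⁆ = (2 : K) • X) (hHY : ⁅H, Y⁆ = (-2 : K) • Y) (hXY : ⁅X, Y⁆ = H)
    (hspan : (ad K L H).eigenspace (-2) ⊔ (ad K L H).eigenspace (-1) ⊔ (ad K L H).eigenspace 0 ⊔
      (ad K L H).eigenspace 1 ⊔ (ad K L H).eigenspace 2 = ⊤) :
    LinearMap.ker (ad K L X) =
      LinearMap.ker (ad K L X) ⊓ LinearMap.ker (ad K L H) ⊓ LinearMap.ker (ad K L Y) ⊔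
        (ad K L H).eigenspace 1 ⊔ (ad K L H).eigenspace 2 := by
  have hbot : ∀ μ ∉ ({-2, -1, 0, 1, 2} : Set K), (ad K L H).eigenspace μ = ⊥ := fun μ hμ ↦
    (ad K L H).eigenspace_eq_bot_of_biSup_eq_top
      (by simpa only [iSup_insert, iSup_singleton, sup_assoc] using hspan) hμ
  refine le_antisymm (fun v hv ↦ ?_) ?_
  · obtain ⟨u₁, hu₁, v₂, hv₂, rfl⟩ := Submodule.mem_sup.mp (hspan ▸ Submodule.mem_top (x := v))
    obtain ⟨u₀, hu₀, v₁, hv₁, rfl⟩ := Submodule.mem_sup.mp hu₁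
    obtain ⟨u, hu, v₀, hv₀, rfl⟩ := Submodule.mem_sup.mp hu₀
    obtain ⟨w₂, hw₂, w₁, hw₁, rfl⟩ := Submodule.mem_sup.mp hu
    have hXv₁ := lie_eq_zero_of_eigenspace_add_eq_bot hHX (hbot _ (by norm_num)) hv₁
    have hXv₂ := lie_eq_zero_of_eigenspace_add_eq_bot hHX (hbot _ (by norm_num)) hv₂
    have hsum : ⁅X, w₂⁆ + ⁅X, w₁⁆ + ⁅X, v₀⁆ = 0 := by
      simpa [hXv₁, hXv₂] using hv
    obtain ⟨hXw₂, hXw₁, hXv₀⟩ := (ad K L H).eigenspaces_iSupIndep.eq_zero_of_add_add_eq_zero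
      (by norm_num) (by norm_num) (by norm_num) (lie_mem_eigenspace_ad_add hHX hw₂)
      (lie_mem_eigenspace_ad_add hHX hw₁) (lie_mem_eigenspace_ad_add hHX hv₀) hsum
    rw [eq_zero_of_lie_eq_zero_of_mem_eigenspace hHY hXY (by norm_num) (hbot _ (by norm_num))
        hw₂ hXw₂,
      eq_zero_of_lie_eq_zero_of_mem_eigenspace hHY hXY (by norm_num) (hbot _ (by norm_num))
        hw₁ hXw₁, zero_add, zero_add]
    exact Submodule.add_mem_sup (Submodule.add_mem_sup
      (mem_centralizer_of_lie_eq_zero_of_mem_eigenspace_zero hHY hXY (hbot _ (by norm_num))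
        hv₀ hXv₀) hv₁) hv₂
  · refine sup_le (sup_le (inf_le_left.trans inf_le_left) ?_) ?_ <;> intro v hv <;>
      exact lie_eq_zero_of_eigenspace_add_eq_bot hHX (hbot _ (by norm_num)) hv

end SlTwoGrading

theorem stmt_8_general {L : Type*} [LieRing L] [LieAlgebra ℝ L]
    (X H Y : L)
    (hHX : ⁅H, X⁆ = (2 : ℝ) • X) (hHY : ⁅H, Y⁆ = (-2 : ℝ) • Y)
    (hXY : ⁅X, Y⁆ = H)
    (g : ℤ → Submodule ℝ L)
    (hg : ∀ j : ℤ, g j = Module.End.eigenspace (LieAlgebra.ad ℝ L H) (j : ℝ))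
    (hspan : g (-2) ⊔ g (-1) ⊔ g 0 ⊔ g 1 ⊔ g 2 = ⊤) :
    (LinearMap.ker (LieAlgebra.ad ℝ L X) =
      (LinearMap.ker (LieAlgebra.ad ℝ L X) ⊓ LinearMap.ker (LieAlgebra.ad ℝ L H) ⊓
        LinearMap.ker (LieAlgebra.ad ℝ L Y)) ⊔ g 1 ⊔ g 2) ∧
    (∀ a ∈ LinearMap.ker (LieAlgebra.ad ℝ L X) ⊓ LinearMap.ker (LieAlgebra.ad ℝ L H) ⊓
        LinearMap.ker (LieAlgebra.ad ℝ L Y),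
      ∀ b ∈ g 1, ∀ c ∈ g 2, a + b + c = 0 → a = 0 ∧ b = 0 ∧ c = 0) := by
  simp only [hg, Int.cast_neg, Int.cast_ofNat, Int.cast_one, Int.cast_zero] at hspan ⊢
  refine ⟨ker_ad_eq_centralizer_sup_eigenspace_one_sup_eigenspace_two hHX hHY hXY hspan,
    fun a ha b hb c hc habc ↦ ?_⟩
  have ha₀ : a ∈ (ad ℝ L H).eigenspace 0 := by
    rw [eigenspace_zero]
    exact ha.1.2
  exact (ad ℝ L H).eigenspaces_iSupIndep.eq_zero_of_add_add_eq_zero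
    (by norm_num) (by norm_num) (by norm_num) ha₀ hb hc habc

/-- The centralizer of `X` decomposes as
`Z_L(X) = Z_L(X,H,Y) ⊕ g_1 ⊕ g_2`, an internal direct sum of vector
subspaces of `L`. -/
theorem stmt_8 {L : Type*} [LieRing L] [LieAlgebra ℝ L]
    [Module.Finite ℝ L] [LieAlgebra.IsSemisimple ℝ L]
    (X H Y : L)
    (hHX : ⁅H, X⁆ = (2 : ℝ) • X) (hHY : ⁅H, Y⁆ = (-2 : ℝ) • Y)
    (hXY : ⁅X, Y⁆ = H)
    (g : ℤ → Submodule ℝ L)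
    (hg : ∀ j : ℤ, g j = Module.End.eigenspace (LieAlgebra.ad ℝ L H) (j : ℝ))
    (hspan : g (-2) ⊔ g (-1) ⊔ g 0 ⊔ g 1 ⊔ g 2 = ⊤) :
    (LinearMap.ker (LieAlgebra.ad ℝ L X) =
      (LinearMap.ker (LieAlgebra.ad ℝ L X) ⊓ LinearMap.ker (LieAlgebra.ad ℝ L H) ⊓
        LinearMap.ker (LieAlgebra.ad ℝ L Y)) ⊔ g 1 ⊔ g 2) ∧
    (∀ a ∈ LinearMap.ker (LieAlgebra.ad ℝ L X) ⊓ LinearMap.ker (LieAlgebra.ad ℝ L H) ⊓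
        LinearMap.ker (LieAlgebra.ad ℝ L Y),
      ∀ b ∈ g 1, ∀ c ∈ g 2, a + b + c = 0 → a = 0 ∧ b = 0 ∧ c = 0) :=
  stmt_8_general X H Y hHX hHY hXY g hg hspan
end

section
/- The zero eigenspace decomposes as g_0 = Z_L(X,H,Y) ⊕ [X, g_{−2}], an internal direct sum of vector subspaces of L. -/
/-- The zero eigenspace decomposes as
`g_0 = Z_L(X,H,Y) ⊕ [X, g_{−2}]`, an internal direct sum of vector
subspaces of `L`. -/
theorem stmt_10 {L : Type*} [LieRing L] [LieAlgebra ℝ L]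
    [Module.Finite ℝ L] [LieAlgebra.IsSemisimple ℝ L]
    (X H Y : L)
    (hHX : ⁅H, X⁆ = (2 : ℝ) • X) (hHY : ⁅H, Y⁆ = (-2 : ℝ) • Y)
    (hXY : ⁅X, Y⁆ = H)
    (g : ℤ → Submodule ℝ L)
    (hg : ∀ j : ℤ, g j = Module.End.eigenspace (LieAlgebra.ad ℝ L H) (j : ℝ))
    (hspan : g (-2) ⊔ g (-1) ⊔ g 0 ⊔ g 1 ⊔ g 2 = ⊤) :
    (g 0 =
      (LinearMap.ker (LieAlgebra.ad ℝ L X) ⊓ LinearMap.ker (LieAlgebra.ad ℝ L H) ⊓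
        LinearMap.ker (LieAlgebra.ad ℝ L Y)) ⊔
      Submodule.map (LieAlgebra.ad ℝ L X) (g (-2))) ∧
    (∀ a ∈ LinearMap.ker (LieAlgebra.ad ℝ L X) ⊓ LinearMap.ker (LieAlgebra.ad ℝ L H) ⊓
        LinearMap.ker (LieAlgebra.ad ℝ L Y),
      ∀ b ∈ Submodule.map (LieAlgebra.ad ℝ L X) (g (-2)),
        a + b = 0 → a = 0 ∧ b = 0) := by
  set E : ℝ → Submodule ℝ L := Module.End.eigenspace (LieAlgebra.ad ℝ L H) with hE
  -- membership in eigenspaces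
  have hmem : ∀ (c : ℝ) (z : L), z ∈ E c ↔ ⁅H, z⁆ = c • z := by
    intro c z
    rw [hE, Module.End.mem_eigenspace_iff, LieAlgebra.ad_apply]
  -- shift by +2 under ad X
  have hshiftX : ∀ (c : ℝ) (z : L), z ∈ E c → ⁅X, z⁆ ∈ E (c + 2) := by
    intro c z hz
    rw [hmem] at hz ⊢
    rw [leibniz_lie, hHX, hz, smul_lie, lie_smul]
    module
  -- shift by -2 under ad Y
  have hshiftY : ∀ (c : ℝ) (z : L), z ∈ E c → ⁅Y, z⁆ ∈ E (c - 2) := by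
    intro c z hz
    rw [hmem] at hz ⊢
    rw [leibniz_lie, hHY, hz, smul_lie, lie_smul]
    module
  -- vanishing of eigenspaces outside {-2,...,2}
  have hbot : ∀ c : ℝ, c ≠ -2 → c ≠ -1 → c ≠ 0 → c ≠ 1 → c ≠ 2 → E c = ⊥ := by
    intro c h1 h2 h3 h4 h5
    have hind := Module.End.eigenspaces_iSupIndep (LieAlgebra.ad ℝ L H)
    rw [iSupIndep_def] at hind
    have htop : (⊤ : Submodule ℝ L) ≤ ⨆ (j : ℝ) (_ : j ≠ c),
        Module.End.eigenspace (LieAlgebra.ad ℝ L H) j := by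
      rw [← hspan]
      have key : ∀ j : ℤ, (j : ℝ) ≠ c → g j ≤ ⨆ (j : ℝ) (_ : j ≠ c),
          Module.End.eigenspace (LieAlgebra.ad ℝ L H) j := by
        intro j hj
        rw [hg j]
        exact le_iSup₂ (f := fun (j : ℝ) (_ : j ≠ c) =>
          Module.End.eigenspace (LieAlgebra.ad ℝ L H) j) (j : ℝ) hj
      refine sup_le (sup_le (sup_le (sup_le ?_ ?_) ?_) ?_) ?_ <;>
        [exact key (-2) (by push_cast; exact fun h => h1 h.symm);
         exact key (-1) (by push_cast; exact fun h => h2 h.symm);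
         exact key 0 (by push_cast; exact fun h => h3 h.symm);
         exact key 1 (by push_cast; exact fun h => h4 h.symm);
         exact key 2 (by push_cast; exact fun h => h5 h.symm)]
    have hd : Disjoint (E c) (⊤ : Submodule ℝ L) := (hind c).mono_right htop
    exact disjoint_top.mp hd
  have hYX : ⁅Y, X⁆ = -H := by rw [← lie_skew Y X, hXY]
  have h4bot : E 4 = ⊥ := hbot 4 (by norm_num) (by norm_num) (by norm_num) (by norm_num) (by norm_num)
  have hm4bot : E (-4) = ⊥ := hbot (-4) (by norm_num) (by norm_num) (by norm_num) (by norm_num) (by norm_num)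
  constructor
  · apply le_antisymm
    · intro z hz
      rw [hg 0] at hz
      have hz0 : z ∈ E 0 := by rwa [Int.cast_zero] at hz
      have hz0' : ⁅H, z⁆ = 0 := by rw [hmem] at hz0; simpa using hz0
      -- f z ∈ E (-2)
      have hfz : ⁅Y, z⁆ ∈ E (-2) := by
        have := hshiftY 0 z hz0; norm_num at this; exact this
      have hfz' : ⁅H, ⁅Y, z⁆⁆ = (-2 : ℝ) • ⁅Y, z⁆ := (hmem _ _).mp hfz
      -- e z ∈ E 2
      have hez : ⁅X, z⁆ ∈ E 2 := by
        have := hshiftX 0 z hz0; norm_num at this; exact this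
      have hez' : ⁅H, ⁅X, z⁆⁆ = (2 : ℝ) • ⁅X, z⁆ := (hmem _ _).mp hez
      -- e e z = 0
      have heez : ⁅X, ⁅X, z⁆⁆ = 0 := by
        have := hshiftX 2 _ hez
        norm_num at this
        rwa [h4bot, Submodule.mem_bot] at this
      -- f f z = 0
      have hffz : ⁅Y, ⁅Y, z⁆⁆ = 0 := by
        have := hshiftY (-2) _ hfz
        norm_num at this
        rwa [hm4bot, Submodule.mem_bot] at this
      set b : L := (1/2 : ℝ) • ⁅X, ⁅Y, z⁆⁆ with hb
      set a : L := z - b with ha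
      -- key identity: ⁅X, ⁅Y, z⁆⁆ = ⁅Y, ⁅X, z⁆⁆
      have hefz : ⁅X, ⁅Y, z⁆⁆ = ⁅Y, ⁅X, z⁆⁆ := by
        rw [leibniz_lie X Y z, hXY, hz0', zero_add]
      -- e a = 0
      have hea : ⁅X, a⁆ = 0 := by
        have h1 : ⁅X, ⁅X, ⁅Y, z⁆⁆⁆ = (2 : ℝ) • ⁅X, z⁆ := by
          rw [hefz, leibniz_lie X Y ⁅X, z⁆, hXY, hez', heez, lie_zero, add_zero]
        rw [ha, hb, lie_sub, lie_smul, h1]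
        module
      -- h a = 0
      have hha : ⁅H, a⁆ = 0 := by
        have hb0 : ⁅X, ⁅Y, z⁆⁆ ∈ E 0 := by
          have := hshiftX (-2) _ hfz; norm_num at this; exact this
        have : ⁅H, ⁅X, ⁅Y, z⁆⁆⁆ = 0 := by
          have := (hmem _ _).mp hb0; simpa using this
        rw [ha, hb, lie_sub, lie_smul, this, hz0']
        simp
      -- f a = 0
      have hfa : ⁅Y, a⁆ = 0 := by
        have h1 : ⁅Y, ⁅X, ⁅Y, z⁆⁆⁆ = (2 : ℝ) • ⁅Y, z⁆ := by
          rw [leibniz_lie Y X ⁅Y, z⁆, hffz, lie_zero, add_zero, hYX, neg_lie, hfz']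
          module
        rw [ha, hb, lie_sub, lie_smul, h1]
        module
      have hzab : z = a + b := by rw [ha]; abel
      rw [hzab]
      apply Submodule.add_mem_sup
      · refine Submodule.mem_inf.mpr ⟨Submodule.mem_inf.mpr ⟨?_, ?_⟩, ?_⟩ <;>
          simp [LinearMap.mem_ker, LieAlgebra.ad_apply, hea, hha, hfa]
      · refine ⟨(1/2 : ℝ) • ⁅Y, z⁆, ?_, ?_⟩
        · rw [hg (-2)]
          have : ((-2 : ℤ) : ℝ) = (-2 : ℝ) := by norm_num
          rw [this]
          exact Submodule.smul_mem _ _ hfz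
        · rw [LieAlgebra.ad_apply, lie_smul, hb]
    · apply sup_le
      · intro a haa
        rw [Submodule.mem_inf, Submodule.mem_inf] at haa
        obtain ⟨⟨-, hah⟩, -⟩ := haa
        rw [LinearMap.mem_ker, LieAlgebra.ad_apply] at hah
        rw [hg 0, Int.cast_zero]
        exact (hmem 0 a).mpr (by rw [hah, zero_smul])
      · rintro - ⟨v, hv, rfl⟩
        rw [hg (-2), show ((-2 : ℤ) : ℝ) = (-2 : ℝ) by norm_num] at hv
        rw [hg 0, show ((0 : ℤ) : ℝ) = (0 : ℝ) by norm_num, LieAlgebra.ad_apply]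
        have := hshiftX (-2) v hv
        norm_num at this
        exact this
  · rintro a haa b ⟨v, hv, rfl⟩ hab
    rw [hg (-2), show ((-2 : ℤ) : ℝ) = (-2 : ℝ) by norm_num] at hv
    have hv' : ⁅H, v⁆ = (-2 : ℝ) • v := (hmem _ _).mp hv
    have hfv : ⁅Y, v⁆ = 0 := by
      have := hshiftY (-2) v hv
      norm_num at this
      rwa [hm4bot, Submodule.mem_bot] at this
    rw [Submodule.mem_inf, Submodule.mem_inf] at haa
    obtain ⟨⟨-, -⟩, haY⟩ := haa
    rw [LinearMap.mem_ker, LieAlgebra.ad_apply] at haY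
    rw [LieAlgebra.ad_apply] at hab ⊢
    -- ⁅Y, ⁅X, v⁆⁆ = 2 • v
    have key : ⁅Y, ⁅X, v⁆⁆ = (2 : ℝ) • v := by
      rw [leibniz_lie Y X v, hfv, lie_zero, add_zero, hYX, neg_lie, hv']
      module
    have hb0 : ⁅X, v⁆ = -a := by linear_combination (norm := module) hab
    have : (2 : ℝ) • v = 0 := by rw [← key, hb0, lie_neg, haY, neg_zero]
    have hv0 : v = 0 := by
      have := smul_eq_zero.mp this
      rcases this with h | h
      · norm_num at h
      · exact h
    constructor
    · have : ⁅X, v⁆ = 0 := by rw [hv0, lie_zero]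
      rw [this, add_zero] at hab
      exact hab
    · rw [hv0, lie_zero]
end

section
/- Let σ be an involutive automorphism of the Lie algebra L satisfying σ(H) = −H, and let L^σ = {v ∈ L : σ(v) = v} be its fixed-point subalgebra. Then L = L^σ + Z_L(X) + [X, g_{−2}] (sum of vector subspaces of L). -/
/-!
Decompose `L` into the `ad H`-eigenspaces `g_j`, `|j| ≤ 2`. Since `ad X` raises weights by two and
there are no weights `3, 4`, both `g_1` and `g_2` lie in `Z_L(X)`. Because `σ` negates `H`, it swaps
`g_j` and `g_{-j}`, so for `w ∈ g_{-1}, g_{-2}` the splitting `w = (w + σ w) - σ w` puts `w` in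
`L^σ + Z_L(X)`. For `w ∈ g_0` the vector `z = [X, w] ∈ g_2` is primitive for the `sl₂`-action, and
`sl₂`-theory gives `z = (ad X)² u` with `u = ¼ (ad Y)² z ∈ g_{-2}`; hence `w - [X, u] ∈ Z_L(X)`.
-/

open LieAlgebra Module.End

section Sl2Grading

variable {K L : Type*} [Field K] [LieRing L] [LieAlgebra K L]

theorem mem_eigenspace_ad_iff {H w : L} {r : K} :
    w ∈ eigenspace (ad K L H) r ↔ ⁅H, w⁆ = r • w := by
  rw [mem_eigenspace_iff, ad_apply]

theorem lie_mem_eigenspace_ad_add_s16 {H x y : L} {r s : K}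
    (hx : x ∈ eigenspace (ad K L H) r) (hy : y ∈ eigenspace (ad K L H) s) :
    ⁅x, y⁆ ∈ eigenspace (ad K L H) (r + s) := by
  rw [mem_eigenspace_ad_iff] at hx hy ⊢
  rw [leibniz_lie, hx, hy, smul_lie, lie_smul]
  module

theorem LieHom.map_mem_eigenspace_ad_neg_s16 {H w : L} {r : K} (σ : L →ₗ⁅K⁆ L) (hσH : σ H = -H)
    (hw : w ∈ eigenspace (ad K L H) r) : σ w ∈ eigenspace (ad K L H) (-r) := by
  rw [mem_eigenspace_ad_iff] at hw ⊢
  have h := σ.map_lie H w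
  rw [hw, hσH, neg_lie, map_smul] at h
  rw [neg_smul, h, neg_neg]

theorem lie_eq_zero_of_eigenspace_add_two_eq_bot {H X w : L} {r : K}
    (hHX : ⁅H, X⁆ = (2 : K) • X) (hbot : eigenspace (ad K L H) (2 + r) = ⊥)
    (hw : w ∈ eigenspace (ad K L H) r) : ⁅X, w⁆ = 0 := by
  have h := lie_mem_eigenspace_ad_add_s16 (mem_eigenspace_ad_iff.mpr hHX) hw
  rwa [hbot, Submodule.mem_bot] at h

theorem lie_lie_lie_lie_eq_four_smul_of_primitive {X H Y z : L}
    (hHY : ⁅H, Y⁆ = (-2 : K) • Y) (hXY : ⁅X, Y⁆ = H)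
    (hz : ⁅H, z⁆ = (2 : K) • z) (hXz : ⁅X, z⁆ = 0) :
    ⁅X, ⁅X, ⁅Y, ⁅Y, z⁆⁆⁆⁆ = (4 : K) • z := by
  have hXYz : ⁅X, ⁅Y, z⁆⁆ = (2 : K) • z := by
    rw [leibniz_lie, hXY, hz, hXz, lie_zero, add_zero]
  have hHYz : ⁅H, ⁅Y, z⁆⁆ = 0 := by
    rw [leibniz_lie, hHY, hz, smul_lie, lie_smul]
    module
  have hXYYz : ⁅X, ⁅Y, ⁅Y, z⁆⁆⁆ = (2 : K) • ⁅Y, z⁆ := by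
    rw [leibniz_lie, hXY, hHYz, hXYz, lie_smul, zero_add]
  rw [hXYYz, lie_smul, hXYz, smul_smul]
  norm_num

theorem eigenspace_zero_le_ker_sup_map [CharZero K] {X H Y : L}
    (hHX : ⁅H, X⁆ = (2 : K) • X) (hHY : ⁅H, Y⁆ = (-2 : K) • Y) (hXY : ⁅X, Y⁆ = H)
    (hbot : eigenspace (ad K L H) 4 = ⊥) :
    eigenspace (ad K L H) 0 ≤
      LinearMap.ker (ad K L X) ⊔ (eigenspace (ad K L H) (-2)).map (ad K L X) := by
  intro w hw
  have hX : X ∈ eigenspace (ad K L H) 2 := mem_eigenspace_ad_iff.mpr hHX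
  have hY : Y ∈ eigenspace (ad K L H) (-2) := mem_eigenspace_ad_iff.mpr hHY
  set z := ⁅X, w⁆
  have hz : z ∈ eigenspace (ad K L H) 2 := by
    simpa using lie_mem_eigenspace_ad_add_s16 hX hw
  have hXz : ⁅X, z⁆ = 0 :=
    lie_eq_zero_of_eigenspace_add_two_eq_bot hHX (by norm_num [hbot]) hz
  set u := (4⁻¹ : K) • ⁅Y, ⁅Y, z⁆⁆
  have hu : u ∈ eigenspace (ad K L H) (-2) := by
    refine Submodule.smul_mem _ _ ?_
    simpa using lie_mem_eigenspace_ad_add_s16 hY (lie_mem_eigenspace_ad_add_s16 hY hz)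
  have hXXu : ⁅X, ⁅X, u⁆⁆ = z := by
    rw [lie_smul, lie_smul,
      lie_lie_lie_lie_eq_four_smul_of_primitive hHY hXY (mem_eigenspace_ad_iff.mp hz) hXz, smul_smul]
    norm_num
  have hker : w - ⁅X, u⁆ ∈ LinearMap.ker (ad K L X) := by
    rw [LinearMap.mem_ker, ad_apply, lie_sub, hXXu, sub_self]
  rw [← sub_add_cancel w ⁅X, u⁆]
  exact Submodule.add_mem_sup hker ⟨u, hu, rfl⟩

theorem eigenspace_neg_le_fixed_sup_ker {X H : L} {r : K} (σ : L →ₗ⁅K⁆ L)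
    (hinv : ∀ v, σ (σ v) = v) (hσH : σ H = -H) (hHX : ⁅H, X⁆ = (2 : K) • X)
    (hbot : eigenspace (ad K L H) (2 + r) = ⊥) :
    eigenspace (ad K L H) (-r) ≤
      eigenspace (σ : Module.End K L) 1 ⊔ LinearMap.ker (ad K L X) := by
  intro w hw
  have hσw : σ w ∈ eigenspace (ad K L H) r := by
    simpa using σ.map_mem_eigenspace_ad_neg_s16 hσH hw
  have hfix : w + σ w ∈ eigenspace (σ : Module.End K L) 1 := by
    rw [mem_eigenspace_iff, one_smul, LieHom.coe_toLinearMap, map_add, hinv, add_comm]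
  have hker : -σ w ∈ LinearMap.ker (ad K L X) := by
    rw [LinearMap.mem_ker, ad_apply, lie_neg,
      lie_eq_zero_of_eigenspace_add_two_eq_bot hHX hbot hσw, neg_zero]
  rw [← add_neg_cancel_right w (σ w)]
  exact Submodule.add_mem_sup hfix hker

end Sl2Grading

theorem Module.End.eigenspace_eq_bot_of_top_le_biSup {K V : Type*} [Field K] [AddCommGroup V]
    [Module K V] (f : Module.End K V) {s : Set K}
    (hs : ⊤ ≤ ⨆ μ ∈ s, f.eigenspace μ) {r : K} (hr : r ∉ s) : f.eigenspace r = ⊥ := by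
  have hle : ⨆ μ ∈ s, f.eigenspace μ ≤ ⨆ (μ) (_ : μ ≠ r), f.eigenspace μ :=
    biSup_mono fun _ hμ => ne_of_mem_of_not_mem hμ hr
  exact disjoint_top.mp ((f.eigenspaces_iSupIndep r).mono_right (hs.trans hle))

theorem stmt_16_general {L : Type*} [LieRing L] [LieAlgebra ℝ L]
    (X H Y : L)
    (hHX : ⁅H, X⁆ = (2 : ℝ) • X) (hHY : ⁅H, Y⁆ = (-2 : ℝ) • Y)
    (hXY : ⁅X, Y⁆ = H)
    (g : ℤ → Submodule ℝ L)
    (hg : ∀ j : ℤ, g j = Module.End.eigenspace (LieAlgebra.ad ℝ L H) (j : ℝ))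
    (hspan : g (-2) ⊔ g (-1) ⊔ g 0 ⊔ g 1 ⊔ g 2 = ⊤)
    (σ : L →ₗ⁅ℝ⁆ L) (hinv : ∀ v : L, σ (σ v) = v) (hσH : σ H = -H) :
    ∀ v : L, ∃ a c d : L,
      σ a = a ∧ ⁅X, c⁆ = 0 ∧
      d ∈ Submodule.map (LieAlgebra.ad ℝ L X) (g (-2)) ∧
      v = a + c + d := by
  simp only [hg] at hspan ⊢
  push_cast at hspan ⊢
  have hbot : ∀ r : ℝ, r ∉ ({-2, -1, 0, 1, 2} : Set ℝ) → eigenspace (ad ℝ L H) r = ⊥ := by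
    refine fun r hr => (ad ℝ L H).eigenspace_eq_bot_of_top_le_biSup ?_ hr
    rw [← hspan]
    refine sup_le (sup_le (sup_le (sup_le ?_ ?_) ?_) ?_) ?_ <;> exact le_biSup _ (by norm_num)
  have hneg r (hr : eigenspace (ad ℝ L H) (2 + r) = ⊥) :=
    eigenspace_neg_le_fixed_sup_ker σ hinv hσH hHX hr
  have hpos r (hr : eigenspace (ad ℝ L H) (2 + r) = ⊥) :
      eigenspace (ad ℝ L H) r ≤ LinearMap.ker (ad ℝ L X) :=
    fun _ hw => LinearMap.mem_ker.mpr (lie_eq_zero_of_eigenspace_add_two_eq_bot hHX hr hw)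
  have hzero := eigenspace_zero_le_ker_sup_map hHX hHY hXY (hbot 4 (by norm_num))
  have hS : ⊤ ≤ eigenspace (σ : Module.End ℝ L) 1 ⊔ LinearMap.ker (ad ℝ L X) ⊔
      (eigenspace (ad ℝ L H) (-2)).map (ad ℝ L X) := by
    rw [← hspan]
    refine sup_le (sup_le (sup_le (sup_le ?_ ?_) ?_) ?_) ?_
    · exact le_sup_of_le_left (hneg 2 (hbot _ (by norm_num)))
    · exact le_sup_of_le_left (hneg 1 (hbot _ (by norm_num)))
    · exact hzero.trans (sup_le_sup_right le_sup_right _)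
    · exact le_sup_of_le_left (le_sup_of_le_right (hpos 1 (hbot _ (by norm_num))))
    · exact le_sup_of_le_left (le_sup_of_le_right (hpos 2 (hbot _ (by norm_num))))
  intro v
  obtain ⟨y, hy, d, hd, rfl⟩ := Submodule.mem_sup.mp (hS (Submodule.mem_top (x := v)))
  obtain ⟨a, ha, c, hc, rfl⟩ := Submodule.mem_sup.mp hy
  exact ⟨a, c, d, by simpa using mem_eigenspace_iff.mp ha, LinearMap.mem_ker.mp hc, hd, rfl⟩

/-- If `σ` is an involutive automorphism of `L` with
`σ(H) = −H`, and `L^σ` its fixed-point subalgebra, then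
`L = L^σ + Z_L(X) + [X, g_{−2}]` (sum of vector subspaces of `L`). -/
theorem stmt_16 {L : Type*} [LieRing L] [LieAlgebra ℝ L]
    [Module.Finite ℝ L] [LieAlgebra.IsSemisimple ℝ L]
    (X H Y : L)
    (hHX : ⁅H, X⁆ = (2 : ℝ) • X) (hHY : ⁅H, Y⁆ = (-2 : ℝ) • Y)
    (hXY : ⁅X, Y⁆ = H)
    (g : ℤ → Submodule ℝ L)
    (hg : ∀ j : ℤ, g j = Module.End.eigenspace (LieAlgebra.ad ℝ L H) (j : ℝ))
    (hspan : g (-2) ⊔ g (-1) ⊔ g 0 ⊔ g 1 ⊔ g 2 = ⊤)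
    (σ : L →ₗ⁅ℝ⁆ L) (hinv : ∀ v : L, σ (σ v) = v) (hσH : σ H = -H) :
    ∀ v : L, ∃ a c d : L,
      σ a = a ∧ ⁅X, c⁆ = 0 ∧
      d ∈ Submodule.map (LieAlgebra.ad ℝ L X) (g (-2)) ∧
      v = a + c + d :=
  stmt_16_general X H Y hHX hHY hXY g hg hspan σ hinv hσH
end
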